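/- arXiv:2204.06621 — 6 statements merged into one kernel-verified Lean document; each statement's English description precedes it below -/
import Mathlib

section
/- Let B be a torsion-free commutative ring (viewed inside ℚ ⊗ B). Then the set I_P(B) := {x ∈ B : x^n/n! ∈ B for all n ≥ 1} is an ideal of B, and moreover for every x ∈ I_P(B) and every m ≥ 1, the divided power x^[m] := x^m/m! again lies in I_P(B). -/
/-!
Sums: in the binomial expansion of `(x + y)^n` the term `C(n,i) x^i y^(n-i)` is divisible by
`C(n,i) i! (n-i)! = n!`. Divided powers: `(m!)^n z^n = x^(mn)` is divisible by
`(mn)! = (m!)^n n! · u`, where `u` counts the partitions of an `mn`-set into `n` blocks of size `m`,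
and `(m!)^n` may be cancelled because `B` is torsion-free.
-/

open Nat

section CommSemiring

variable {B : Type*} [CommSemiring B]

theorem factorial_dvd_add_pow {x y : B} (hx : ∀ i, (i ! : B) ∣ x ^ i)
    (hy : ∀ j, (j ! : B) ∣ y ^ j) (n : ℕ) : (n ! : B) ∣ (x + y) ^ n := by
  rw [add_pow]
  refine Finset.dvd_sum fun i hi => ?_
  have hfac : ((i ! * (n - i)! * n.choose i : ℕ) : B) = n ! := by
    rw [mul_comm, ← mul_assoc,
      Nat.choose_mul_factorial_mul_factorial (Finset.mem_range_succ_iff.mp hi)]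
  rw [← hfac]
  push_cast
  exact mul_dvd_mul (mul_dvd_mul (hx i) (hy (n - i))) dvd_rfl

theorem factorial_dvd_mul_pow (c : B) {x : B} {n : ℕ} (hx : (n ! : B) ∣ x ^ n) :
    (n ! : B) ∣ (c * x) ^ n := by
  rw [mul_pow]
  exact hx.mul_left _

variable (B) in
/-- The ideal `I_P(B)` of elements all of whose divided powers `x^n / n!` lie in `B`. -/
def factorialDvdPowIdeal : Ideal B where
  carrier := {x | ∀ n, (n ! : B) ∣ x ^ n}
  zero_mem' n := by
    rcases n.eq_zero_or_pos with rfl | hn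
    · simp
    · simp [zero_pow hn.ne']
  add_mem' hx hy := factorial_dvd_add_pow hx hy
  smul_mem' c _ hx n := factorial_dvd_mul_pow c (hx n)

theorem forall_factorial_dvd_pow_iff {x : B} :
    (∀ n, (n ! : B) ∣ x ^ n) ↔ ∀ n, 1 ≤ n → (n ! : B) ∣ x ^ n := by
  refine ⟨fun h n _ => h n, fun h n => ?_⟩
  rcases n.eq_zero_or_pos with rfl | hn
  · simp
  · exact h n hn

theorem factorial_dvd_pow_of_pow_eq_factorial_mul [IsAddTorsionFree B] {x z : B} (hx : ∀ k, (k ! : B) ∣ x ^ k) {m : ℕ} (hm : m ≠ 0)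
    (hz : x ^ m = m ! * z) (n : ℕ) : (n ! : B) ∣ z ^ n := by
  obtain ⟨y, hy⟩ := hx (n * m)
  refine ⟨uniformBell n m * y, nsmul_right_injective (pow_ne_zero n m.factorial_ne_zero) ?_⟩
  simp only [nsmul_eq_mul]
  calc ((m ! ^ n : ℕ) : B) * z ^ n = x ^ (n * m) := by
        rw [mul_comm n m, pow_mul, hz, mul_pow]; push_cast; rfl
    _ = ((uniformBell n m * m ! ^ n * n ! : ℕ) : B) * y := by rw [hy, uniformBell_mul_eq n hm]
    _ = ((m ! ^ n : ℕ) : B) * (n ! * (uniformBell n m * y)) := by push_cast; ring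

end CommSemiring

/-- Let `B` be a torsion-free commutative ring.  The set
`I_P(B) = {x ∈ B : n! ∣ x^n for all n ≥ 1}` (the condition `x^n/n! ∈ B` inside `ℚ ⊗ B`)
is an ideal of `B`, and for every `x ∈ I_P(B)`, every `m ≥ 1` and every divided power
`z = x^[m]` (i.e. `x^m = m! * z`), the element `z` again lies in `I_P(B)`. -/
theorem statement0 (B : Type*) [CommRing B]
    (htf : ∀ (n : ℕ), n ≠ 0 → ∀ x : B, (n : B) * x = 0 → x = 0) :
    (∃ I : Ideal B, ∀ x : B,
        x ∈ I ↔ ∀ n : ℕ, 1 ≤ n → ∃ y : B, x ^ n = (n.factorial : B) * y) ∧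
    (∀ x : B, (∀ n : ℕ, 1 ≤ n → ∃ y : B, x ^ n = (n.factorial : B) * y) →
      ∀ m : ℕ, 1 ≤ m → ∀ z : B, x ^ m = (m.factorial : B) * z →
        ∀ n : ℕ, 1 ≤ n → ∃ w : B, z ^ n = (n.factorial : B) * w) := by
  have : IsAddTorsionFree B := ⟨fun n hn a b hab => sub_eq_zero.mp <|
    htf n hn _ (by simp only [nsmul_eq_mul] at hab; rw [mul_sub, hab, sub_self])⟩
  refine ⟨⟨factorialDvdPowIdeal B, fun x => forall_factorial_dvd_pow_iff⟩, ?_⟩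
  intro x hx m hm z hz n _
  exact factorial_dvd_pow_of_pow_eq_factorial_mul (forall_factorial_dvd_pow_iff.mpr hx)
    (by omega) hz n
end

section
/- Let M be an A-module that is separated and complete with respect to a decreasing filtration F^• M by submodules satisfying p^n M ⊆ F^n M for all n (i.e. M ≅ lim M/F^n M). Then M is also p-adically separated and complete: M ≅ lim M/p^n M. -/
/-!
Separation is immediate from `a ^ n • M ⊆ F n`. For completeness, let `x` be a sequence with
`x (n + 1) - x n = a ^ n • y n`; it is `F`-Cauchy, so it has an `F`-adic limit `z`. For fixed `n`
the tail `x (n + k) - x n = a ^ n • s k` with `s k = ∑_{j < k} a ^ j • y (n + j)`, and `s` is again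
`F`-Cauchy with a limit `t`. Then `z - x n - a ^ n • t` lies in every `F k`, hence vanishes.
-/

open Finset

section FiltrationAdic

variable {A M : Type*} [CommRing A] [AddCommGroup M] [Module A M]
  (a : A) (F : ℕ → Submodule A M)

theorem eq_zero_of_forall_eq_pow_smul (haF : ∀ n, ∀ y : M, a ^ n • y ∈ F n)
    (hsep : ∀ x : M, (∀ n, x ∈ F n) → x = 0) (x : M) (hx : ∀ n, ∃ y : M, x = a ^ n • y) :
    x = 0 :=
  hsep x fun n => by
    obtain ⟨y, rfl⟩ := hx n
    exact haF n y

theorem sub_eq_pow_smul_sum {x y : ℕ → M} (hy : ∀ n, x (n + 1) - x n = a ^ n • y n) (n k : ℕ) :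
    x (n + k) - x n = a ^ n • ∑ j ∈ range k, a ^ j • y (n + j) := by
  have htel := sum_range_sub (fun j => x (n + j)) k
  rw [add_zero] at htel
  rw [← htel, smul_sum]
  refine sum_congr rfl fun j _ => ?_
  rw [smul_smul, ← pow_add, ← hy, add_assoc]

theorem exists_forall_sub_sum_pow_smul_mem (haF : ∀ n, ∀ y : M, a ^ n • y ∈ F n)
    (hcomp : ∀ x : ℕ → M, (∀ n, x (n + 1) - x n ∈ F n) → ∃ y : M, ∀ n, y - x n ∈ F n)
    (y : ℕ → M) : ∃ t : M, ∀ k, t - ∑ j ∈ range k, a ^ j • y j ∈ F k :=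
  hcomp _ fun k => by simpa only [sum_range_succ, add_sub_cancel_left] using haF k (y k)

theorem exists_forall_sub_eq_pow_smul (hdec : ∀ n, F (n + 1) ≤ F n)
    (haF : ∀ n, ∀ y : M, a ^ n • y ∈ F n) (hsep : ∀ x : M, (∀ n, x ∈ F n) → x = 0)
    (hcomp : ∀ x : ℕ → M, (∀ n, x (n + 1) - x n ∈ F n) → ∃ y : M, ∀ n, y - x n ∈ F n)
    (x : ℕ → M) (hx : ∀ n, ∃ y : M, x (n + 1) - x n = a ^ n • y) :
    ∃ z : M, ∀ n, ∃ y : M, z - x n = a ^ n • y := by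
  choose y hy using hx
  obtain ⟨z, hz⟩ := hcomp x fun n => hy n ▸ haF n (y n)
  refine ⟨z, fun n => ?_⟩
  obtain ⟨t, ht⟩ := exists_forall_sub_sum_pow_smul_mem a F haF hcomp fun j => y (n + j)
  refine ⟨t, sub_eq_zero.mp (hsep _ fun k => ?_)⟩
  have hsplit : z - x n - a ^ n • t =
      (z - x (n + k)) - a ^ n • (t - ∑ j ∈ range k, a ^ j • y (n + j)) := by
    rw [smul_sub, ← sub_eq_pow_smul_sum a hy]
    abel
  rw [hsplit]
  exact sub_mem (antitone_nat_of_succ_le hdec (Nat.le_add_left k n) (hz (n + k)))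
    ((F k).smul_mem _ (ht k))

end FiltrationAdic

theorem statement5_general (p : ℕ) (A : Type*) [CommRing A]
    (M : Type*) [AddCommGroup M] [Module A M]
    (F : ℕ → Submodule A M) (hdec : ∀ n, F (n + 1) ≤ F n)
    (hpF : ∀ n, ∀ y : M, ((p : A) ^ n) • y ∈ F n)
    (hsep : ∀ x : M, (∀ n, x ∈ F n) → x = 0)
    (hcomp : ∀ x : ℕ → M, (∀ n, x (n + 1) - x n ∈ F n) →
      ∃ y : M, ∀ n, y - x n ∈ F n) :
    (∀ x : M, (∀ n : ℕ, ∃ y : M, x = ((p : A) ^ n) • y) → x = 0) ∧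
    (∀ x : ℕ → M, (∀ n : ℕ, ∃ y : M, x (n + 1) - x n = ((p : A) ^ n) • y) →
      ∃ z : M, ∀ n : ℕ, ∃ y : M, z - x n = ((p : A) ^ n) • y) :=
  ⟨eq_zero_of_forall_eq_pow_smul _ F hpF hsep,
    exists_forall_sub_eq_pow_smul _ F hdec hpF hsep hcomp⟩

/-- Let `M` be an `A`-module, separated and complete for a decreasing
filtration `F^•M` by submodules with `p^nM ⊆ F^nM` for all `n`.  Then `M` is `p`-adically
separated and complete.  (Separation and completeness are expressed via Cauchy sequences:
`M ≅ lim M/F^nM` iff `⋂ F^nM = 0` and every `F`-adic Cauchy sequence converges.) -/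
theorem statement5 (p : ℕ) (hp : p.Prime) (A : Type*) [CommRing A]
    (M : Type*) [AddCommGroup M] [Module A M]
    (F : ℕ → Submodule A M) (hdec : ∀ n, F (n + 1) ≤ F n)
    (hpF : ∀ n, ∀ y : M, ((p : A) ^ n) • y ∈ F n)
    (hsep : ∀ x : M, (∀ n, x ∈ F n) → x = 0)
    (hcomp : ∀ x : ℕ → M, (∀ n, x (n + 1) - x n ∈ F n) →
      ∃ y : M, ∀ n, y - x n ∈ F n) :
    (∀ x : M, (∀ n : ℕ, ∃ y : M, x = ((p : A) ^ n) • y) → x = 0) ∧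
    (∀ x : ℕ → M, (∀ n : ℕ, ∃ y : M, x (n + 1) - x n = ((p : A) ^ n) • y) →
      ∃ z : M, ∀ n : ℕ, ∃ y : M, z - x n = ((p : A) ^ n) • y) :=
  statement5_general p A M F hdec hpF hsep hcomp
end

section
/- Let (M_n)_{n≥1} be an inverse system of A-modules with p^n M_n = 0 such that each transition map induces an isomorphism M_n ⊗_A A/p^{n-1} ≅ M_{n-1}. Let M̂ := lim M_n and let F^n ⊆ M̂ be the kernel of the projection M̂ → M_n. Then F^n = p^n M̂ for every n; consequently the natural map M̂ ⊗_A A/p^n A → M_n is an isomorphism for each n and M̂ is p-adically separated and complete. -/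
/-!
If `x` vanishes at level `k`, then `t (x (k+1)) = 0`, so `x (k+1) = π^k w`; lifting `w` to the
limit gives `y` with `x - π^k y` vanishing at level `k+1`. Iterating from level `n` writes `x` as
`π^n ∑ π^i yᵢ`, a series that makes sense in the limit because `π^m` kills `M m`, so at level `m`
only its first `m` terms survive. Completeness then follows by taking the diagonal `m ↦ cₘ m`.
-/

open Finset

theorem exists_compatible_apply_eq {M : ℕ → Type*} (t : ∀ n, M (n + 1) → M n)
    (hsurj : ∀ n, Function.Surjective (t n)) (n : ℕ) (z : M n) :
    ∃ x : ∀ m, M m, (∀ m, t m (x (m + 1)) = x m) ∧ x n = z := by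
  induction n generalizing M with
  | zero =>
    refine ⟨fun m => Nat.rec (motive := fun m => M m) z
      (fun m xm => Function.surjInv (hsurj m) xm) m, fun m => ?_, rfl⟩
    exact Function.surjInv_eq (hsurj m) _
  | succ n ih =>
    -- the induction hypothesis for the shifted system `m ↦ M (m + 1)`
    obtain ⟨x, hx, rfl⟩ :=
      ih (M := fun m => M (m + 1)) (fun m => t (m + 1)) (fun m => hsurj (m + 1)) z
    exact ⟨fun | 0 => t 0 (x 0) | m + 1 => x m, fun | 0 => rfl | m + 1 => hx m, rfl⟩

section InverseLimit

variable {A : Type*} [CommRing A] {M : ℕ → Type*} [∀ n, AddCommGroup (M n)]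
  [∀ n, Module A (M n)] (t : ∀ n, M (n + 1) →ₗ[A] M n)

def inverseLimit : Submodule A (∀ n, M n) where
  carrier := {x | ∀ m, t m (x (m + 1)) = x m}
  add_mem' hx hy m := by simp [hx m, hy m]
  zero_mem' _ := map_zero _
  smul_mem' a _ hx m := by simp [hx m]

variable {t}

theorem apply_eq_zero_of_le {x : ∀ n, M n} (hx : x ∈ inverseLimit t) {k m : ℕ}
    (hk : x k = 0) (hmk : m ≤ k) : x m = 0 := by
  induction k, hmk using Nat.le_induction with
  | base => exact hk
  | succ k _ ih => exact ih (by rw [← hx k, hk, map_zero])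

variable {π : A} (hkill : ∀ n (x : M n), π ^ n • x = 0)
include hkill

theorem sum_range_pow_smul_mem_inverseLimit {y : ℕ → ∀ n, M n}
    (hy : ∀ i, y i ∈ inverseLimit t) :
    (fun m => ∑ i ∈ range m, π ^ i • y i m) ∈ inverseLimit t := by
  intro m
  rw [map_sum, sum_range_succ, map_smul, hy m m, hkill, add_zero]
  exact sum_congr rfl fun i _ => by rw [map_smul, hy i m]

variable (hsurj : ∀ n, Function.Surjective (t n))
  (hker : ∀ n (x : M (n + 1)), t n x = 0 → ∃ y, x = π ^ n • y)
include hsurj hker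

omit hkill in
theorem exists_apply_succ_eq_pow_smul {x : ∀ n, M n} (hx : x ∈ inverseLimit t) {k : ℕ}
    (hk : x k = 0) : ∃ y ∈ inverseLimit t, x (k + 1) = π ^ k • y (k + 1) := by
  obtain ⟨w, hw⟩ := hker k (x (k + 1)) (by rw [hx k, hk])
  obtain ⟨y, hy, hyw⟩ := exists_compatible_apply_eq (fun n => t n) hsurj (k + 1) w
  exact ⟨y, hy, by rw [hyw, hw]⟩

theorem exists_eq_pow_smul_of_apply_eq_zero {x : ∀ n, M n} (hx : x ∈ inverseLimit t) {n : ℕ}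
    (hxn : x n = 0) : ∃ y ∈ inverseLimit t, x = π ^ n • y := by
  have step (k : ℕ) (r : inverseLimit t) : ∃ y : inverseLimit t,
      (r : ∀ m, M m) k = 0 → (r : ∀ m, M m) (k + 1) = π ^ k • (y : ∀ m, M m) (k + 1) := by
    by_cases hr : (r : ∀ m, M m) k = 0
    · obtain ⟨y, hy, h⟩ := exists_apply_succ_eq_pow_smul hsurj hker r.2 hr
      exact ⟨⟨y, hy⟩, fun _ => h⟩
    · exact ⟨0, fun h => absurd h hr⟩
  choose y hy using step
  -- `r i` is the remainder after `i` correction steps; it vanishes at level `n + i`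
  let r : ℕ → inverseLimit t := fun i => Nat.rec (motive := fun _ => inverseLimit t) ⟨x, hx⟩
    (fun i ri => ri - π ^ (n + i) • y (n + i) ri) i
  let c (i : ℕ) : ∀ m, M m := y (n + i) (r i)
  have hr (i : ℕ) : (r i : ∀ m, M m) (n + i) = 0 := by
    induction i with
    | zero => exact hxn
    | succ i ih =>
      change (r i : ∀ m, M m) (n + i + 1) - π ^ (n + i) • c i (n + i + 1) = 0
      rw [hy _ _ ih, sub_self]
  have hsum (k : ℕ) : x = ∑ i ∈ range k, π ^ (n + i) • c i + r k := by
    induction k with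
    | zero => simp [r]
    | succ k ih =>
      rw [sum_range_succ, ih]
      change _ = _ + ((r k : ∀ m, M m) - π ^ (n + k) • c k)
      abel
  refine ⟨_, sum_range_pow_smul_mem_inverseLimit hkill fun i => (y (n + i) (r i)).2,
    funext fun m => ?_⟩
  rw [congrFun (hsum m) m, Pi.add_apply, apply_eq_zero_of_le (r m).2 (hr m) (by omega),
    add_zero, Finset.sum_apply, Pi.smul_apply, smul_sum]
  exact sum_congr rfl fun i _ => by rw [pow_add, mul_smul]; rfl

theorem apply_eq_zero_iff_exists_eq_pow_smul {x : ∀ n, M n} (hx : x ∈ inverseLimit t)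
    (n : ℕ) : x n = 0 ↔ ∃ y ∈ inverseLimit t, x = π ^ n • y :=
  ⟨exists_eq_pow_smul_of_apply_eq_zero hkill hsurj hker hx, fun ⟨y, _, hy⟩ => by
    rw [hy, Pi.smul_apply, hkill]⟩

theorem diag_mem_inverseLimit_and_exists_sub_eq_pow_smul {c : ℕ → ∀ n, M n}
    (hc : ∀ i, c i ∈ inverseLimit t)
    (hcauchy : ∀ i, ∃ y ∈ inverseLimit t, c (i + 1) - c i = π ^ i • y) :
    (fun m => c m m) ∈ inverseLimit t ∧
      ∀ n, ∃ y ∈ inverseLimit t, (fun m => c m m) - c n = π ^ n • y := by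
  have hdiag : (fun m => c m m) ∈ inverseLimit t := by
    intro m
    obtain ⟨y, _, hy⟩ := hcauchy m
    have hm := congrFun hy m
    rw [Pi.sub_apply, Pi.smul_apply, hkill, sub_eq_zero] at hm
    rw [hc (m + 1) m, hm]
  exact ⟨hdiag, fun n => exists_eq_pow_smul_of_apply_eq_zero hkill hsurj hker
    (sub_mem hdiag (hc n)) (sub_self (c n n))⟩

end InverseLimit

theorem statement6_general (p : ℕ) (A : Type*) [CommRing A]
    (M : ℕ → Type*) [∀ n, AddCommGroup (M n)] [∀ n, Module A (M n)]
    (hkill : ∀ n, ∀ x : M n, ((p : A) ^ n) • x = 0)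
    (t : ∀ n, M (n + 1) →ₗ[A] M n)
    (hsurj : ∀ n, Function.Surjective (t n))
    (hker : ∀ n (x : M (n + 1)), t n x = 0 ↔ ∃ y : M (n + 1), x = ((p : A) ^ n) • y) :
    -- `F^n = p^n L`, surjectivity of projections, and `p`-adic separation/completeness:
    (∀ (n : ℕ) (x : {x : (m : ℕ) → M m // ∀ m, t m (x (m + 1)) = x m}),
        x.1 n = 0 ↔ ∃ y : {x : (m : ℕ) → M m // ∀ m, t m (x (m + 1)) = x m},
          ∀ m, x.1 m = ((p : A) ^ n) • y.1 m) ∧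
    (∀ (n : ℕ) (z : M n), ∃ x : {x : (m : ℕ) → M m // ∀ m, t m (x (m + 1)) = x m},
        x.1 n = z) ∧
    (∀ x : {x : (m : ℕ) → M m // ∀ m, t m (x (m + 1)) = x m},
        (∀ n : ℕ, ∃ y : {x : (m : ℕ) → M m // ∀ m, t m (x (m + 1)) = x m},
          ∀ m, x.1 m = ((p : A) ^ n) • y.1 m) → ∀ m, x.1 m = 0) ∧
    (∀ c : ℕ → {x : (m : ℕ) → M m // ∀ m, t m (x (m + 1)) = x m},
        (∀ n : ℕ, ∃ y : {x : (m : ℕ) → M m // ∀ m, t m (x (m + 1)) = x m},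
          ∀ m, (c (n + 1)).1 m - (c n).1 m = ((p : A) ^ n) • y.1 m) →
        ∃ z : {x : (m : ℕ) → M m // ∀ m, t m (x (m + 1)) = x m},
          ∀ n : ℕ, ∃ y : {x : (m : ℕ) → M m // ∀ m, t m (x (m + 1)) = x m},
            ∀ m, z.1 m - (c n).1 m = ((p : A) ^ n) • y.1 m) := by
  have hker' n x := (hker n x).mp
  refine ⟨fun n x => ?_, fun n z => ?_, fun x h m => ?_, fun c hc => ?_⟩
  · rw [apply_eq_zero_iff_exists_eq_pow_smul hkill hsurj hker' x.2 n]
    exact ⟨fun ⟨y, hy, h⟩ => ⟨⟨y, hy⟩, congrFun h⟩, fun ⟨y, h⟩ => ⟨y, y.2, funext h⟩⟩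
  · obtain ⟨x, hx, hxn⟩ := exists_compatible_apply_eq (fun n => t n) hsurj n z
    exact ⟨⟨x, hx⟩, hxn⟩
  · obtain ⟨y, hy⟩ := h m
    rw [hy m, hkill]
  · obtain ⟨hdiag, hlim⟩ := diag_mem_inverseLimit_and_exists_sub_eq_pow_smul hkill hsurj hker'
      (c := fun i => (c i).1) (fun i => (c i).2)
      fun i => let ⟨y, hy⟩ := hc i; ⟨y.1, y.2, funext hy⟩
    refine ⟨⟨fun m => (c m).1 m, hdiag⟩, fun n => ?_⟩
    obtain ⟨y, hy, h⟩ := hlim n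
    exact ⟨⟨y, hy⟩, congrFun h⟩

/-- Drinfeld–Temkin.  Let `(M n)` be an inverse system of `A`-modules
with `p^n M n = 0`, whose transition maps `t n : M (n+1) → M n` are surjective with
kernel `p^n · M (n+1)` (i.e. they induce isomorphisms `M (n+1) ⊗ A/p^n ≅ M n`).
Let `L = lim M n`, realized as the compatible families.  Then the kernel `F^n` of the
projection `L → M n` equals `p^n L`; consequently the natural map `L ⊗ A/p^n → M n` is an
isomorphism for each `n` (the projections are surjective with kernel `p^n L`) and `L` is
`p`-adically separated and complete. -/
theorem statement6 (p : ℕ) (hp : p.Prime) (A : Type*) [CommRing A]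
    (M : ℕ → Type*) [∀ n, AddCommGroup (M n)] [∀ n, Module A (M n)]
    (hkill : ∀ n, ∀ x : M n, ((p : A) ^ n) • x = 0)
    (t : ∀ n, M (n + 1) →ₗ[A] M n)
    (hsurj : ∀ n, Function.Surjective (t n))
    (hker : ∀ n (x : M (n + 1)), t n x = 0 ↔ ∃ y : M (n + 1), x = ((p : A) ^ n) • y) :
    -- `F^n = p^n L`, surjectivity of projections, and `p`-adic separation/completeness:
    (∀ (n : ℕ) (x : {x : (m : ℕ) → M m // ∀ m, t m (x (m + 1)) = x m}),
        x.1 n = 0 ↔ ∃ y : {x : (m : ℕ) → M m // ∀ m, t m (x (m + 1)) = x m},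
          ∀ m, x.1 m = ((p : A) ^ n) • y.1 m) ∧
    (∀ (n : ℕ) (z : M n), ∃ x : {x : (m : ℕ) → M m // ∀ m, t m (x (m + 1)) = x m},
        x.1 n = z) ∧
    (∀ x : {x : (m : ℕ) → M m // ∀ m, t m (x (m + 1)) = x m},
        (∀ n : ℕ, ∃ y : {x : (m : ℕ) → M m // ∀ m, t m (x (m + 1)) = x m},
          ∀ m, x.1 m = ((p : A) ^ n) • y.1 m) → ∀ m, x.1 m = 0) ∧
    (∀ c : ℕ → {x : (m : ℕ) → M m // ∀ m, t m (x (m + 1)) = x m},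
        (∀ n : ℕ, ∃ y : {x : (m : ℕ) → M m // ∀ m, t m (x (m + 1)) = x m},
          ∀ m, (c (n + 1)).1 m - (c n).1 m = ((p : A) ^ n) • y.1 m) →
        ∃ z : {x : (m : ℕ) → M m // ∀ m, t m (x (m + 1)) = x m},
          ∀ n : ℕ, ∃ y : {x : (m : ℕ) → M m // ∀ m, t m (x (m + 1)) = x m},
            ∀ m, z.1 m - (c n).1 m = ((p : A) ^ n) • y.1 m) :=
  statement6_general p A M hkill t hsurj hker
end

section
/- Let A be a p-torsion-free commutative ring and a ∈ A an element such that (p, a) is an A-regular sequence. Let A[t]^ denote the p-adic completion of the polynomial ring A[t]. Then the quotient A[t]^/(pt − a) is p-torsion free. -/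
/-!
Two properties of the pair `(p, a)` — `p` is a nonzerodivisor, and `a` is a nonzerodivisor
modulo `p` — pass from `A` to `A[t]` coefficientwise, and from `A[t]` to its `p`-adic completion
levelwise on Cauchy sequences. In any ring where they hold, `p` is a nonzerodivisor modulo
`pt - a`: if `p x = c (pt - a)` then `a c = p (ct - x)`, so `p ∣ c`, and cancelling `p` shows
that `x` is a multiple of `pt - a`.
-/

open AdicCompletion Polynomial

/-- `b` is a nonzerodivisor on `R ⧸ πR`. -/
def IsRegularModulo {R : Type*} [CommRing R] (π b : R) : Prop :=
  ∀ x : R, π ∣ b * x → π ∣ x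

section Principal

variable {R : Type*} [CommRing R] {π : R}

lemma mem_span_singleton_pow_smul_top_iff (n : ℕ) (x : R) :
    x ∈ (Ideal.span {π} ^ n • ⊤ : Submodule R R) ↔ π ^ n ∣ x := by
  rw [smul_eq_mul, Ideal.mul_top, Ideal.span_singleton_pow, Ideal.mem_span_singleton]

lemma IsSMulRegular.pow_dvd_of_pow_succ_dvd_mul (hπ : IsSMulRegular R π) {n : ℕ} {x : R}
    (h : π ^ (n + 1) ∣ π * x) : π ^ n ∣ x := by
  obtain ⟨u, hu⟩ := h
  exact ⟨u, hπ (by simp only [smul_eq_mul]; rw [hu]; ring)⟩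

namespace AdicCompletion

lemma mk_eq_zero_iff_forall_pow_dvd (F : AdicCauchySequence (Ideal.span {π}) R) :
    mk _ _ F = 0 ↔ ∀ n, π ^ n ∣ F n := by
  simp only [AdicCompletion.ext_iff, mk_apply_coe, val_zero_apply, Submodule.mkQ_apply,
    Submodule.Quotient.mk_eq_zero, mem_span_singleton_pow_smul_top_iff]

lemma AdicCauchySequence.pow_dvd_sub_succ (F : AdicCauchySequence (Ideal.span {π}) R) (n : ℕ) :
    π ^ n ∣ F n - F (n + 1) := by
  rw [← mem_span_singleton_pow_smul_top_iff, ← SModEq.sub_mem]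
  exact F.property n.le_succ

end AdicCompletion

theorem IsSMulRegular.adicCompletion (hπ : IsSMulRegular R π) :
    IsSMulRegular (AdicCompletion (Ideal.span {π}) R) π := by
  refine isSMulRegular_iff_right_eq_zero_of_smul.mpr fun x hx ↦ ?_
  obtain ⟨F, rfl⟩ := mk_surjective _ _ x
  rw [← map_smul, mk_eq_zero_iff_forall_pow_dvd] at hx
  rw [mk_eq_zero_iff_forall_pow_dvd]
  intro n
  have hsucc : π ^ n ∣ F (n + 1) := hπ.pow_dvd_of_pow_succ_dvd_mul (hx (n + 1))
  simpa using (F.pow_dvd_sub_succ n).add hsucc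

theorem IsRegularModulo.adicCompletion {b : R} (hπ : IsSMulRegular R π)
    (hb : IsRegularModulo π b) :
    IsRegularModulo (algebraMap R (AdicCompletion (Ideal.span {π}) R) π)
      (algebraMap R (AdicCompletion (Ideal.span {π}) R) b) := by
  rintro x ⟨g, hg⟩
  obtain ⟨F, rfl⟩ := mk_surjective _ _ x
  obtain ⟨G, rfl⟩ := mk_surjective _ _ g
  rw [← Algebra.smul_def, ← Algebra.smul_def, ← map_smul, ← map_smul, ← sub_eq_zero, ← map_sub,
    mk_eq_zero_iff_forall_pow_dvd] at hg
  have hdvd : ∀ n, π ∣ F (n + 1) := fun n ↦ hb _ <| by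
    have := (dvd_pow_self π n.succ_ne_zero).trans (hg (n + 1))
    simpa using this.add (dvd_mul_right π (G (n + 1)))
  -- `x = π • y`, with `y` represented by the sequence `n ↦ F (n + 1) / π`.
  choose H hH using hdvd
  have hcauchy : ∀ n, π ^ n ∣ H n - H (n + 1) := fun n ↦
    hπ.pow_dvd_of_pow_succ_dvd_mul <| by
      simpa [mul_sub, ← hH] using F.pow_dvd_sub_succ (n + 1)
  refine ⟨mk _ _ (AdicCauchySequence.mk _ _ H fun n ↦ ?_), ?_⟩
  · rw [SModEq.sub_mem, mem_span_singleton_pow_smul_top_iff]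
    exact hcauchy n
  rw [← Algebra.smul_def, ← map_smul, ← sub_eq_zero, ← map_sub, mk_eq_zero_iff_forall_pow_dvd]
  intro n
  simpa [← hH] using F.pow_dvd_sub_succ n

end Principal

theorem IsRegularModulo.polynomial {A : Type*} [CommRing A] {c b : A}
    (hb : IsRegularModulo c b) : IsRegularModulo (C c) (C b) := by
  intro f hf
  rw [C_dvd_iff_dvd_coeff] at hf ⊢
  exact fun i ↦ hb _ (by simpa only [coeff_C_mul] using hf i)

theorem IsSMulRegular.quotient_span_mul_sub {C : Type*} [CommRing C] {π b : C}
    (hπ : IsSMulRegular C π) (hb : IsRegularModulo π b) (t : C) :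
    IsSMulRegular (C ⧸ Ideal.span {π * t - b}) π := by
  refine isSMulRegular_iff_right_eq_zero_of_smul.mpr fun z hz ↦ ?_
  obtain ⟨x, rfl⟩ := Ideal.Quotient.mk_surjective z
  rw [Algebra.smul_def, Ideal.Quotient.algebraMap_eq, ← map_mul, Ideal.Quotient.eq_zero_iff_mem,
    Ideal.mem_span_singleton] at hz
  obtain ⟨c, hc⟩ := hz
  obtain ⟨g, rfl⟩ : π ∣ c := hb c ⟨c * t - x, by linear_combination hc⟩
  have hx : x = g * (π * t - b) := hπ (by simp only [smul_eq_mul]; linear_combination hc)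
  rw [Ideal.Quotient.eq_zero_iff_mem, Ideal.mem_span_singleton]
  exact ⟨g, by rw [hx, mul_comm]⟩

theorem statement11_general (p : ℕ) (A : Type*) [CommRing A]
    (htf : ∀ x : A, (p : A) * x = 0 → x = 0)
    (a : A) (hreg : ∀ x : A, (p : A) ∣ a * x → (p : A) ∣ x) :
    ∀ z : (AdicCompletion (Ideal.span {(p : Polynomial A)}) (Polynomial A)) ⧸
        (Ideal.span {algebraMap (Polynomial A)
            (AdicCompletion (Ideal.span {(p : Polynomial A)}) (Polynomial A))
            ((p : Polynomial A) * Polynomial.X - Polynomial.C a)}),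
      (p : (AdicCompletion (Ideal.span {(p : Polynomial A)}) (Polynomial A)) ⧸
        (Ideal.span {algebraMap (Polynomial A)
            (AdicCompletion (Ideal.span {(p : Polynomial A)}) (Polynomial A))
            ((p : Polynomial A) * Polynomial.X - Polynomial.C a)})) * z = 0 → z = 0 := by
  set B := AdicCompletion (Ideal.span {(p : A[X])}) A[X]
  have hpoly : IsSMulRegular A[X] (p : A[X]) := by
    rw [← C_eq_natCast, ← algebraMap_eq, isSMulRegular_algebraMap_iff]
    exact (isSMulRegular_iff_right_eq_zero_of_smul.mpr htf).polynomial
  have hπ : IsSMulRegular B (p : B) := by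
    rw [← map_natCast (algebraMap A[X] B), isSMulRegular_algebraMap_iff]
    exact hpoly.adicCompletion
  have hb : IsRegularModulo (p : B) (algebraMap A[X] B (C a)) := by
    rw [← map_natCast (algebraMap A[X] B)]
    refine IsRegularModulo.adicCompletion hpoly ?_
    rw [← C_eq_natCast]
    exact IsRegularModulo.polynomial hreg
  have hquot := hπ.quotient_span_mul_sub hb (algebraMap A[X] B X)
  rw [← map_natCast (algebraMap A[X] B), ← map_mul, ← map_sub] at hquot
  intro z hz
  refine hquot.right_eq_zero_of_smul ?_
  rwa [Algebra.smul_def, map_natCast]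

/-- Let `A` be a `p`-torsion-free commutative ring and `a ∈ A` with
`(p, a)` an `A`-regular sequence (`a` is a nonzerodivisor on `A/pA`).  Let `A[t]^` be the
`p`-adic completion of the polynomial ring `A[t]`.  Then `A[t]^/(pt − a)` is `p`-torsion
free. -/
theorem statement11 (p : ℕ) (hp : p.Prime) (A : Type*) [CommRing A]
    (htf : ∀ x : A, (p : A) * x = 0 → x = 0)
    (a : A) (hreg : ∀ x : A, (p : A) ∣ a * x → (p : A) ∣ x) :
    ∀ z : (AdicCompletion (Ideal.span {(p : Polynomial A)}) (Polynomial A)) ⧸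
        (Ideal.span {algebraMap (Polynomial A)
            (AdicCompletion (Ideal.span {(p : Polynomial A)}) (Polynomial A))
            ((p : Polynomial A) * Polynomial.X - Polynomial.C a)}),
      (p : (AdicCompletion (Ideal.span {(p : Polynomial A)}) (Polynomial A)) ⧸
        (Ideal.span {algebraMap (Polynomial A)
            (AdicCompletion (Ideal.span {(p : Polynomial A)}) (Polynomial A))
            ((p : Polynomial A) * Polynomial.X - Polynomial.C a)})) * z = 0 → z = 0 :=
  statement11_general p A htf a hreg
end

section
/- Let B be a p-torsion-free commutative ring, I ⊆ B an ideal containing p, and ψ : B → B an endomorphism with ψ(b) ≡ b^p (mod I) for all b ∈ B (so ψ(I) ⊆ I). Let θ : B → B′ be a B-algebra with B′ p-torsion free in which I·B′ = p·B′, equipped with the unique additive map ρ : I → B′ satisfying p·ρ(x) = θ(x), and suppose ψ extends to an endomorphism ψ′ of B′ compatible with θ. For x ∈ I set ε′(x) := ψ′(ρ(x)) − ρ(x)^p ∈ B′. Then for all x, y ∈ I and b ∈ B: (1) ρ(ψ(x)) = ψ′(ρ(x)); (2) ε′(x + y) ≡ ε′(x) + ε′(y) (mod pB′); (3) ε′(bx)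 ≡ θ(b^p)·ε′(x) (mod pB′). -/
/-!
Multiplication by `p` is injective on `B′`, so every identity for `ρ` follows from the
corresponding identity for `θ = p ρ`: this gives additivity, `B`-linearity and (1).
Then `ε′ = δ ∘ ρ` for the Frobenius defect `δ(u) = ψ′ u − u ^ p` of `ψ′`. Modulo `p`, `δ` is
additive because `(u + v) ^ p ≡ u ^ p + v ^ p`, and `δ(s r) ≡ s ^ p δ(r)` as soon as `δ(s) ≡ 0`;
the latter holds for `s = θ b` because `δ(θ b) = θ(ψ b − b ^ p) ∈ θ(I) B′ = p B′`.
-/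

section FrobeniusDefect

variable {R : Type*} [CommRing R]

def frobeniusDefect (f : R →+* R) (p : ℕ) (r : R) : R :=
  f r - r ^ p

theorem frobeniusDefect_add_eq {p : ℕ} (hp : p.Prime) (f : R →+* R) (u v : R) :
    ∃ c : R, frobeniusDefect f p (u + v) =
      frobeniusDefect f p u + frobeniusDefect f p v + p * c := by
  obtain ⟨r, hr⟩ := exists_add_pow_prime_eq hp u v
  refine ⟨-(u * v * r), ?_⟩
  rw [frobeniusDefect, frobeniusDefect, frobeniusDefect, map_add, hr]
  ring

theorem frobeniusDefect_mul_of_eq {p : ℕ} (f : R →+* R) {s d : R}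
    (hs : frobeniusDefect f p s = p * d) (r : R) :
    frobeniusDefect f p (s * r) = s ^ p * frobeniusDefect f p r + p * (d * f r) := by
  unfold frobeniusDefect at hs ⊢
  rw [map_mul, eq_add_of_sub_eq' hs]
  ring

end FrobeniusDefect

section Dilatation

variable {B B' : Type*} [CommRing B] [CommRing B'] {I : Ideal B} {θ : B →+* B'}
  {ρ : I → B'} {a : B'}

theorem dilatation_map_add (ha : IsLeftRegular a) (hρ : ∀ x : I, a * ρ x = θ x) (x y : I) :
    ρ (x + y) = ρ x + ρ y :=
  ha <| by simp only [mul_add, hρ, Submodule.coe_add, map_add]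

theorem dilatation_map_smul (ha : IsLeftRegular a) (hρ : ∀ x : I, a * ρ x = θ x)
    (b : B) (x : I) : ρ (b • x) = θ b * ρ x :=
  ha <| by simp only [hρ, Submodule.coe_smul, smul_eq_mul, map_mul, mul_left_comm a]

theorem dilatation_map_comp (ha : IsLeftRegular a) (hρ : ∀ x : I, a * ρ x = θ x)
    {ψ : B →+* B} {ψ' : B' →+* B'} (hψ'a : ψ' a = a)
    (hcompat : ∀ b : B, ψ' (θ b) = θ (ψ b)) (x : I) (hx : ψ x ∈ I) :
    ρ ⟨ψ x, hx⟩ = ψ' (ρ x) :=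
  ha <| by beta_reduce; rw [hρ, ← hcompat, ← hρ, map_mul, hψ'a]

theorem exists_frobeniusDefect_map_eq (hIa : I.map θ ≤ Ideal.span {a}) (p : ℕ)
    {ψ : B →+* B} {ψ' : B' →+* B'} (hcompat : ∀ b : B, ψ' (θ b) = θ (ψ b))
    {b : B} (hb : ψ b - b ^ p ∈ I) :
    ∃ d : B', frobeniusDefect ψ' p (θ b) = a * d := by
  have hmem : θ (ψ b - b ^ p) ∈ Ideal.span {a} := hIa (Ideal.mem_map_of_mem θ hb)
  obtain ⟨d, hd⟩ := Ideal.mem_span_singleton.mp hmem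
  exact ⟨d, by rw [frobeniusDefect, hcompat, ← map_pow, ← map_sub, hd]⟩

end Dilatation

theorem statement17_general (p : ℕ) (hp : p.Prime)
    (B : Type*) [CommRing B]
    (B' : Type*) [CommRing B'] (htfB' : ∀ x : B', (p : B') * x = 0 → x = 0)
    (I : Ideal B)
    (ψ : B →+* B) (hψ : ∀ b : B, ψ b - b ^ p ∈ I)
    (θ : B →+* B') (hIB' : Ideal.map θ I = Ideal.span {(p : B')})
    (ρ : I → B') (hρ : ∀ x : I, (p : B') * ρ x = θ x)
    (ψ' : B' →+* B') (hcompat : ∀ b : B, ψ' (θ b) = θ (ψ b)) :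
    (∀ (x : I) (hx : ψ x ∈ I), ρ ⟨ψ x, hx⟩ = ψ' (ρ x)) ∧
    (∀ x y : I, ∃ c : B',
      (ψ' (ρ (x + y)) - ρ (x + y) ^ p)
        = (ψ' (ρ x) - ρ x ^ p) + (ψ' (ρ y) - ρ y ^ p) + (p : B') * c) ∧
    (∀ (b : B) (x : I), ∃ c : B',
      (ψ' (ρ (b • x)) - ρ (b • x) ^ p)
        = θ (b ^ p) * (ψ' (ρ x) - ρ x ^ p) + (p : B') * c) := by
  have hreg : IsLeftRegular (p : B') := isLeftRegular_iff_right_eq_zero_of_mul.mpr htfB'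
  refine ⟨dilatation_map_comp hreg hρ (map_natCast ψ' p) hcompat, fun x y => ?_, fun b x => ?_⟩
  · rw [dilatation_map_add hreg hρ]
    exact frobeniusDefect_add_eq hp ψ' (ρ x) (ρ y)
  · obtain ⟨d, hd⟩ := exists_frobeniusDefect_map_eq hIB'.le p hcompat (hψ b)
    rw [dilatation_map_smul hreg hρ, map_pow]
    exact ⟨_, frobeniusDefect_mul_of_eq ψ' hd (ρ x)⟩

/-- Let `B` be a `p`-torsion-free commutative ring, `I ⊆ B` an ideal
containing `p`, and `ψ : B → B` an endomorphism with `ψ(b) ≡ b^p (mod I)` for all `b`.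
Let `θ : B → B′` be a `p`-torsion-free `B`-algebra in which `I·B′ = p·B′`, with the
(unique) map `ρ : I → B′` satisfying `p·ρ(x) = θ(x)`, and suppose `ψ` extends to an
endomorphism `ψ′` of `B′` compatible with `θ`.  Setting `ε′(x) = ψ′(ρ(x)) − ρ(x)^p`,
we have for all `x, y ∈ I` and `b ∈ B`:
(1) `ρ(ψ(x)) = ψ′(ρ(x))`;
(2) `ε′(x+y) ≡ ε′(x) + ε′(y) (mod pB′)`;
(3) `ε′(bx) ≡ θ(b^p)·ε′(x) (mod pB′)`. -/
theorem statement17 (p : ℕ) (hp : p.Prime)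
    (B : Type*) [CommRing B] (htfB : ∀ x : B, (p : B) * x = 0 → x = 0)
    (B' : Type*) [CommRing B'] (htfB' : ∀ x : B', (p : B') * x = 0 → x = 0)
    (I : Ideal B) (hpI : (p : B) ∈ I)
    (ψ : B →+* B) (hψ : ∀ b : B, ψ b - b ^ p ∈ I)
    (θ : B →+* B') (hIB' : Ideal.map θ I = Ideal.span {(p : B')})
    (ρ : I → B') (hρ : ∀ x : I, (p : B') * ρ x = θ x)
    (ψ' : B' →+* B') (hcompat : ∀ b : B, ψ' (θ b) = θ (ψ b)) :
    (∀ (x : I) (hx : ψ x ∈ I), ρ ⟨ψ x, hx⟩ = ψ' (ρ x)) ∧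
    (∀ x y : I, ∃ c : B',
      (ψ' (ρ (x + y)) - ρ (x + y) ^ p)
        = (ψ' (ρ x) - ρ x ^ p) + (ψ' (ρ y) - ρ y ^ p) + (p : B') * c) ∧
    (∀ (b : B) (x : I), ∃ c : B',
      (ψ' (ρ (b • x)) - ρ (b • x) ^ p)
        = θ (b ^ p) * (ψ' (ρ x) - ρ x ^ p) + (p : B') * c) :=
  statement17_general p hp B B' htfB' I ψ hψ θ hIB' ρ hρ ψ' hcompat
end

section
/- Let C be a p-torsion-free commutative ring with Frobenius lift φ, and for c ∈ C with c^p ∈ pC let c = c₀, c₁, c₂, … be a sequence with c_i^p = p·c_{i+1} for all i ≥ 0. Then for every n ≥ 1, writing n = Σ_i a_i p^i in base p and σ := Σ_i a_i, one has c^n ∈ p^{(n−σ)/(p−1)}·C. -/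
/-!
Write `e n := (n - s_p(n)) / (p - 1)`, where `s_p` is the base-`p` digit sum. Peeling off the last
digit, `n = p q + r` with `s_p(n) = r + s_p(q)`, gives `e n = q + e q`. On the other side
`c_j ^ n = (c_j ^ p) ^ q * c_j ^ r = π ^ q * c_{j+1} ^ q * c_j ^ r`, so strong induction on `n`,
simultaneously for all indices `j`, yields `π ^ e n ∣ c_j ^ n`.
-/

namespace Nat

theorem sub_digits_sum_div_sub_one_eq {p : ℕ} (hp : 1 < p) (n : ℕ) :
    (n - (p.digits n).sum) / (p - 1) = n / p + (n / p - (p.digits (n / p)).sum) / (p - 1) := by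
  rcases eq_or_ne n 0 with rfl | hn
  · simp
  have hsum : (p.digits n).sum = n % p + (p.digits (n / p)).sum := by
    rw [digits_eq_cons_digits_div hp hn, List.sum_cons]
  have hsub : n - (p.digits n).sum = (p - 1) * (n / p) + (n / p - (p.digits (n / p)).sum) := by
    have := div_add_mod n p
    have := digit_sum_le p (n / p)
    have := Nat.sub_one_mul p (n / p)
    have : n / p ≤ p * (n / p) := Nat.le_mul_of_pos_left _ (by omega)
    omega
  rw [hsub, mul_add_div (by omega)]

end Nat

theorem pow_sub_digits_sum_div_dvd_pow {M : Type*} [CommMonoid M] {p : ℕ} (hp : 1 < p)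
    {π : M} {c : ℕ → M} (hc : ∀ i, c i ^ p = π * c (i + 1)) (n j : ℕ) :
    π ^ ((n - (p.digits n).sum) / (p - 1)) ∣ c j ^ n := by
  induction n using Nat.strong_induction_on generalizing j with
  | _ n ih =>
    rcases eq_or_ne n 0 with rfl | hn
    · simp
    have hsplit : c j ^ n = π ^ (n / p) * c (j + 1) ^ (n / p) * c j ^ (n % p) := by
      rw [← mul_pow, ← hc, ← pow_mul, ← pow_add, Nat.div_add_mod]
    rw [hsplit, Nat.sub_digits_sum_div_sub_one_eq hp, pow_add]
    exact dvd_mul_of_dvd_left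
      (mul_dvd_mul_left _ (ih _ (Nat.div_lt_self (Nat.pos_of_ne_zero hn) hp) _)) _

theorem statement18_general (p : ℕ) (hp : p.Prime) (C : Type*) [CommRing C]
    (c : ℕ → C) (hc : ∀ i : ℕ, c i ^ p = (p : C) * c (i + 1)) :
    ∀ n : ℕ, 1 ≤ n →
      ∃ y : C, c 0 ^ n = (p : C) ^ ((n - (Nat.digits p n).sum) / (p - 1)) * y :=
  fun n _ => pow_sub_digits_sum_div_dvd_pow hp.one_lt hc n 0

/-- Let `C` be a `p`-torsion-free commutative ring with Frobenius lift
`φ`, and let `c = c₀, c₁, c₂, …` be a sequence in `C` with `cᵢ^p = p·c_{i+1}` for all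
`i`.  Then for every `n ≥ 1`, writing `n = Σ aᵢ pⁱ` in base `p` and `σ = Σ aᵢ` (the sum
of the base-`p` digits of `n`), one has `c^n ∈ p^{(n−σ)/(p−1)}·C` (and
`(n−σ)/(p−1) = ord_p(n!)`). -/
theorem statement18 (p : ℕ) (hp : p.Prime) (C : Type*) [CommRing C]
    (htf : ∀ x : C, (p : C) * x = 0 → x = 0)
    (φ : C →+* C) (hφ : ∀ x : C, ∃ d : C, φ x = x ^ p + (p : C) * d)
    (c : ℕ → C) (hc : ∀ i : ℕ, c i ^ p = (p : C) * c (i + 1)) :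
    ∀ n : ℕ, 1 ≤ n →
      ∃ y : C, c 0 ^ n = (p : C) ^ ((n - (Nat.digits p n).sum) / (p - 1)) * y :=
  statement18_general p hp C c hc
end
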